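/- arXiv:2012.11880 — 6 statements merged into one kernel-verified Lean document; each statement's English description precedes it below -/
import Mathlib

section
/- Let Γ be a finite connected self-centered simple graph with vertex set V and base point v0 ∈ V, satisfying conditions (S1) and (S2). Then for all i, j, k ∈ I and every z ∈ S_k(v0), one has p_{i,j}^k = μ_k · |S_j(z) ∩ S_i(v0)| / (μ_i · μ_j). -/
open Finset

noncomputable section

/-- The sphere of radius `k` around `v`: all vertices at graph distance `k` from `v`. -/
def sph {V : Type*} [Fintype V] (G : SimpleGraph V) (k : ℕ) (v : V) : Finset V :=
  Finset.univ.filter fun w => G.dist v w = k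

/-- Eccentricity of a vertex. -/
def ecc {V : Type*} [Fintype V] (G : SimpleGraph V) (v : V) : ℕ :=
  Finset.univ.sup fun w => G.dist v w

/-- Diameter of the graph. -/
def gdiam {V : Type*} [Fintype V] (G : SimpleGraph V) : ℕ :=
  Finset.univ.sup fun v => ecc G v

/-- The `k`-adjacency matrix `A^(k)`. -/
def Adjk {V : Type*} [Fintype V] (G : SimpleGraph V) (k : ℕ) : Matrix V V ℝ :=
  Matrix.of fun x y => if G.dist x y = k then (1 : ℝ) else 0

/-- The normalized `k`-adjacency matrix `A_k = (1/μ_k) A^(k)`. -/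
def Anorm {V : Type*} [Fintype V] (G : SimpleGraph V) (v0 : V) (k : ℕ) : Matrix V V ℝ :=
  (((sph G k v0).card : ℝ))⁻¹ • Adjk G k

/-- The structure constant `p_{i,j}^k` of the random walk on `(Γ, v0)`. -/
def pcoef {V : Type*} [Fintype V] [DecidableEq V] (G : SimpleGraph V) (v0 : V)
    (i j k : ℕ) : ℝ :=
  (1 / ((sph G i v0).card : ℝ)) *
    ∑ v ∈ sph G i v0, ((sph G j v ∩ sph G k v0).card : ℝ) / ((sph G j v).card : ℝ)

/-- The matrix `D : I × V`, with `(i,v)`-entry `1` if `d(v0,v) = i` and `0` otherwise. -/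
def Dmat {V : Type*} [Fintype V] (G : SimpleGraph V) (v0 : V) :
    Matrix (Fin (gdiam G + 1)) V ℝ :=
  Matrix.of fun i v => if G.dist v0 v = (i : ℕ) then (1 : ℝ) else 0

/-- The `k`-transition matrix `P_k`, with `(i,j)`-entry `p_{k,j}^i`. -/
def Pmat {V : Type*} [Fintype V] [DecidableEq V] (G : SimpleGraph V) (v0 : V) (k : ℕ) :
    Matrix (Fin (gdiam G + 1)) (Fin (gdiam G + 1)) ℝ :=
  Matrix.of fun i j => pcoef G v0 k (j : ℕ) (i : ℕ)

theorem stmt2 {V : Type*} [Fintype V] [DecidableEq V] (G : SimpleGraph V)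
    (hconn : G.Connected) (v0 : V)
    (hsc : ∀ v : V, ecc G v = gdiam G)
    (hS1 : ∀ i : ℕ, i ≤ gdiam G → ∀ v w : V, (sph G i v).card = (sph G i w).card)
    (hS2 : ∀ i j k : ℕ, i ≤ gdiam G → j ≤ gdiam G → k ≤ gdiam G →
      ∀ v ∈ sph G k v0, ∀ w ∈ sph G k v0,
        (sph G i v ∩ sph G j v0).card = (sph G i w ∩ sph G j v0).card) :
    ∀ i j k : ℕ, i ≤ gdiam G → j ≤ gdiam G → k ≤ gdiam G →
      ∀ z ∈ sph G k v0,
        pcoef G v0 i j k =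
          ((sph G k v0).card : ℝ) * ((sph G j z ∩ sph G i v0).card : ℝ) /
            (((sph G i v0).card : ℝ) * ((sph G j v0).card : ℝ)) := by
  intro i j k hi hj hk z hz
  -- indicator formula for intersection cards
  have hcard : ∀ (a b : ℕ) (v : V), (sph G a v ∩ sph G b v0).card
      = ∑ w ∈ sph G b v0, (if G.dist v w = a then 1 else 0) := by
    intro a b v
    rw [← Finset.card_filter]
    congr 1
    ext w
    simp [sph, Finset.mem_inter, Finset.mem_filter, and_comm]
  -- double counting
  have hswap : ∑ v ∈ sph G i v0, (sph G j v ∩ sph G k v0).card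
      = ∑ w ∈ sph G k v0, (sph G j w ∩ sph G i v0).card := by
    calc ∑ v ∈ sph G i v0, (sph G j v ∩ sph G k v0).card
        = ∑ v ∈ sph G i v0, ∑ w ∈ sph G k v0, (if G.dist v w = j then 1 else 0) :=
          Finset.sum_congr rfl fun v _ => hcard j k v
      _ = ∑ w ∈ sph G k v0, ∑ v ∈ sph G i v0, (if G.dist v w = j then 1 else 0) :=
          Finset.sum_comm
      _ = ∑ w ∈ sph G k v0, (sph G j w ∩ sph G i v0).card := by
          refine Finset.sum_congr rfl fun w _ => ?_
          rw [hcard j i w]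
          refine Finset.sum_congr rfl fun v _ => ?_
          rw [SimpleGraph.dist_comm]
  -- each term in the RHS sum is constant by (S2)
  have hconst : ∀ w ∈ sph G k v0, (sph G j w ∩ sph G i v0).card
      = (sph G j z ∩ sph G i v0).card := fun w hw =>
    hS2 j i k hj hi hk w hw z hz
  have key : (∑ v ∈ sph G i v0, ((sph G j v ∩ sph G k v0).card : ℝ))
      = ((sph G k v0).card : ℝ) * ((sph G j z ∩ sph G i v0).card : ℝ) := by
    have : ∑ v ∈ sph G i v0, (sph G j v ∩ sph G k v0).card
        = (sph G k v0).card * (sph G j z ∩ sph G i v0).card := by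
      rw [hswap, Finset.sum_congr rfl hconst, Finset.sum_const, smul_eq_mul]
    exact_mod_cast congrArg (Nat.cast : ℕ → ℝ) this
  -- use (S1) to replace each denominator by μ_j
  have hdenom : ∀ v : V, ((sph G j v).card : ℝ) = ((sph G j v0).card : ℝ) := by
    intro v; exact_mod_cast congrArg (Nat.cast : ℕ → ℝ) (hS1 j hj v v0)
  unfold pcoef
  rw [Finset.sum_congr rfl (fun v _ => by rw [hdenom v]), ← Finset.sum_div, key,
    div_mul_div_comm, one_mul, mul_div_assoc]

end
end

section
/- Let Γ be a finite connected self-centered simple graph with vertex set V and base point v0 ∈ V, satisfying conditions (S1) and (S2). Then for all i, j, k ∈ I, the equality p_{i,j}^k = p_{j,i}^k holds if and only if there exist z, z' ∈ S_k(v0) such that |S_i(z) ∩ S_j(v0)| = |S_j(z') ∩ S_i(v0)|. -/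
open Finset

noncomputable section

lemma dist_getVert_le {V : Type*} {G : SimpleGraph V} (hconn : G.Connected) {u v : V}
    (p : G.Walk u v) (k : ℕ) :
    G.dist u (p.getVert k) ≤ k := by
  induction p generalizing k with
  | nil => simp [SimpleGraph.Walk.getVert, SimpleGraph.dist_self]
  | @cons a b c h q ih =>
    cases k with
    | zero => simp [SimpleGraph.Walk.getVert, SimpleGraph.dist_self]
    | succ k =>
      rw [SimpleGraph.Walk.getVert_cons_succ]
      calc G.dist a (q.getVert k) ≤ G.dist a b + G.dist b (q.getVert k) :=
            hconn.dist_triangle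
        _ ≤ 1 + k := by
            gcongr
            · exact le_trans (SimpleGraph.dist_le (SimpleGraph.Walk.cons h SimpleGraph.Walk.nil))
                (by simp)
            · exact ih k
        _ = k + 1 := by omega

lemma dist_getVert_right_le {V : Type*} (G : SimpleGraph V) {u v : V} (p : G.Walk u v) (k : ℕ) :
    G.dist (p.getVert k) v ≤ p.length - k := by
  induction p generalizing k with
  | nil => simp [SimpleGraph.Walk.getVert]
  | @cons a b c h q ih =>
    cases k with
    | zero =>
      simpa [SimpleGraph.Walk.getVert] using SimpleGraph.dist_le (SimpleGraph.Walk.cons h q)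
    | succ k =>
      rw [SimpleGraph.Walk.getVert_cons_succ]
      simpa using ih k

lemma sph_nonempty {V : Type*} [Fintype V] {G : SimpleGraph V} (hconn : G.Connected)
    (v0 : V) (hsc : ∀ v : V, ecc G v = gdiam G) {k : ℕ} (hk : k ≤ gdiam G) :
    (sph G k v0).Nonempty := by
  obtain ⟨w0, -, hw0⟩ := Finset.exists_mem_eq_sup (Finset.univ : Finset V)
    ⟨v0, Finset.mem_univ v0⟩ (fun w => G.dist v0 w)
  have hd : G.dist v0 w0 = gdiam G := by rw [← hsc v0]; exact hw0.symm
  obtain ⟨p, hp⟩ := hconn.exists_walk_length_eq_dist v0 w0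
  refine ⟨p.getVert k, ?_⟩
  have h1 : G.dist v0 (p.getVert k) ≤ k := dist_getVert_le hconn p k
  have h2 : G.dist (p.getVert k) w0 ≤ p.length - k := dist_getVert_right_le G p k
  have h3 : G.dist v0 w0 ≤ G.dist v0 (p.getVert k) + G.dist (p.getVert k) w0 :=
    hconn.dist_triangle
  have : G.dist v0 (p.getVert k) = k := by omega
  simp [sph, this]

lemma sph_inter_eq {V : Type*} [Fintype V] [DecidableEq V] (G : SimpleGraph V)
    (v0 v : V) (j a : ℕ) :
    sph G j v ∩ sph G a v0 = (sph G a v0).filter fun w => G.dist v w = j := by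
  ext w; simp [sph, and_comm]

lemma sum_swap_key {V : Type*} [Fintype V] [DecidableEq V] (G : SimpleGraph V)
    (v0 : V) (i j k : ℕ) :
    ∑ v ∈ sph G i v0, (sph G j v ∩ sph G k v0).card
      = ∑ w ∈ sph G k v0, (sph G j w ∩ sph G i v0).card := by
  simp only [sph_inter_eq, Finset.card_filter]
  rw [Finset.sum_comm]
  refine Finset.sum_congr rfl fun w _ => Finset.sum_congr rfl fun v _ => ?_
  rw [SimpleGraph.dist_comm]

theorem stmt3 {V : Type*} [Fintype V] [DecidableEq V] (G : SimpleGraph V)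
    (hconn : G.Connected) (v0 : V)
    (hsc : ∀ v : V, ecc G v = gdiam G)
    (hS1 : ∀ i : ℕ, i ≤ gdiam G → ∀ v w : V, (sph G i v).card = (sph G i w).card)
    (hS2 : ∀ i j k : ℕ, i ≤ gdiam G → j ≤ gdiam G → k ≤ gdiam G →
      ∀ v ∈ sph G k v0, ∀ w ∈ sph G k v0,
        (sph G i v ∩ sph G j v0).card = (sph G i w ∩ sph G j v0).card) :
    ∀ i j k : ℕ, i ≤ gdiam G → j ≤ gdiam G → k ≤ gdiam G →
      (pcoef G v0 i j k = pcoef G v0 j i k ↔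
        ∃ z ∈ sph G k v0, ∃ z' ∈ sph G k v0,
          (sph G i z ∩ sph G j v0).card = (sph G j z' ∩ sph G i v0).card) := by
  intro i j k hi hj hk
  obtain ⟨zk, hzk⟩ := sph_nonempty hconn v0 hsc hk
  have hμi : 0 < (sph G i v0).card := (sph_nonempty hconn v0 hsc hi).card_pos
  have hμj : 0 < (sph G j v0).card := (sph_nonempty hconn v0 hsc hj).card_pos
  have hμk : 0 < (sph G k v0).card := Finset.card_pos.mpr ⟨zk, hzk⟩
  set μi : ℝ := ((sph G i v0).card : ℝ) with hμidef
  set μj : ℝ := ((sph G j v0).card : ℝ) with hμjdef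
  set μk : ℝ := ((sph G k v0).card : ℝ) with hμkdef
  have hμi' : (0:ℝ) < μi := by rw [hμidef]; exact_mod_cast hμi
  have hμj' : (0:ℝ) < μj := by rw [hμjdef]; exact_mod_cast hμj
  have hμk' : (0:ℝ) < μk := by rw [hμkdef]; exact_mod_cast hμk
  -- general formula for pcoef
  have key : ∀ a b : ℕ, a ≤ gdiam G → b ≤ gdiam G →
      pcoef G v0 a b k = μk * ((sph G b zk ∩ sph G a v0).card : ℝ) /
        (((sph G a v0).card : ℝ) * ((sph G b v0).card : ℝ)) := by
    intro a b ha hb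
    have hμa : (0:ℝ) < ((sph G a v0).card : ℝ) := by
      exact_mod_cast (sph_nonempty hconn v0 hsc ha).card_pos
    have hμb : (0:ℝ) < ((sph G b v0).card : ℝ) := by
      exact_mod_cast (sph_nonempty hconn v0 hsc hb).card_pos
    have hcardb : ∀ v : V, ((sph G b v).card : ℝ) = ((sph G b v0).card : ℝ) := by
      intro v; exact_mod_cast hS1 b hb v v0
    have hsum : ∑ v ∈ sph G a v0, ((sph G b v ∩ sph G k v0).card : ℝ)
        = ((sph G k v0).card : ℝ) * ((sph G b zk ∩ sph G a v0).card : ℝ) := by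
      have := sum_swap_key G v0 a b k
      have hconst : ∑ w ∈ sph G k v0, ((sph G b w ∩ sph G a v0).card)
          = (sph G k v0).card * (sph G b zk ∩ sph G a v0).card := by
        rw [Finset.sum_congr rfl fun w hw => hS2 b a k hb ha hk w hw zk hzk,
          Finset.sum_const, smul_eq_mul]
      calc (∑ v ∈ sph G a v0, ((sph G b v ∩ sph G k v0).card : ℝ))
          = ((∑ v ∈ sph G a v0, (sph G b v ∩ sph G k v0).card : ℕ) : ℝ) := by push_cast; ring
        _ = (((sph G k v0).card * (sph G b zk ∩ sph G a v0).card : ℕ) : ℝ) := by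
            rw [this, hconst]
        _ = _ := by push_cast; ring
    rw [pcoef]
    simp only [hcardb]
    rw [← Finset.sum_div, hsum]
    field_simp
    rw [hμkdef]
    ring
  rw [key i j hi hj, key j i hj hi]
  have hprod : (0:ℝ) < μi * μj := mul_pos hμi' hμj'
  constructor
  · intro h
    refine ⟨zk, hzk, zk, hzk, ?_⟩
    have h2 : μk * ((sph G j zk ∩ sph G i v0).card : ℝ) / (μi * μj)
        = μk * ((sph G i zk ∩ sph G j v0).card : ℝ) / (μj * μi) := h
    rw [mul_comm μj μi] at h2
    rw [div_eq_div_iff (ne_of_gt hprod) (ne_of_gt hprod)] at h2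
    have h3 : ((sph G j zk ∩ sph G i v0).card : ℝ) = ((sph G i zk ∩ sph G j v0).card : ℝ) :=
      mul_left_cancel₀ (ne_of_gt hμk') (mul_right_cancel₀ (ne_of_gt hprod) h2)
    exact_mod_cast h3.symm
  · rintro ⟨z, hz, z', hz', hzz⟩
    have e1 : (sph G i z ∩ sph G j v0).card = (sph G i zk ∩ sph G j v0).card :=
      hS2 i j k hi hj hk z hz zk hzk
    have e2 : (sph G j z' ∩ sph G i v0).card = (sph G j zk ∩ sph G i v0).card :=
      hS2 j i k hj hi hk z' hz' zk hzk
    have : (sph G j zk ∩ sph G i v0).card = (sph G i zk ∩ sph G j v0).card := by omega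
    rw [this, mul_comm μi μj]

end
end

section
/- Let Γ be a finite connected simple graph with vertex set V and base point v0 ∈ V, satisfying condition (S2). Then for all i, j, k ∈ I, every v ∈ S_i(v0) and every z ∈ S_k(v0), one has μ_i · |S_j(v) ∩ S_k(v0)| = μ_k · |S_j(z) ∩ S_i(v0)|. -/
open Finset

noncomputable section

theorem stmt4 {V : Type*} [Fintype V] [DecidableEq V] (G : SimpleGraph V)
    (hconn : G.Connected) (v0 : V)
    (hS2 : ∀ i j k : ℕ, i ≤ gdiam G → j ≤ gdiam G → k ≤ gdiam G →
      ∀ v ∈ sph G k v0, ∀ w ∈ sph G k v0,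
        (sph G i v ∩ sph G j v0).card = (sph G i w ∩ sph G j v0).card) :
    ∀ i j k : ℕ, i ≤ gdiam G → j ≤ gdiam G → k ≤ gdiam G →
      ∀ v ∈ sph G i v0, ∀ z ∈ sph G k v0,
        (sph G i v0).card * (sph G j v ∩ sph G k v0).card =
          (sph G k v0).card * (sph G j z ∩ sph G i v0).card := by
  intro i j k hi hj hk v hv z hz
  classical
  have hfil : ∀ (a j : ℕ) (x : V),
      sph G j x ∩ sph G a v0 = (sph G a v0).filter (fun y => G.dist x y = j) := by
    intro a j x
    ext y
    simp [sph, Finset.mem_inter, Finset.mem_filter, and_comm]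
  -- double count
  have key : ∑ x ∈ sph G i v0, (sph G j x ∩ sph G k v0).card
      = ∑ y ∈ sph G k v0, (sph G j y ∩ sph G i v0).card := by
    simp only [hfil, Finset.card_filter]
    rw [Finset.sum_comm]
    refine Finset.sum_congr rfl fun y _ => Finset.sum_congr rfl fun x _ => ?_
    rw [SimpleGraph.dist_comm (u := x)]
  have h1 : ∑ x ∈ sph G i v0, (sph G j x ∩ sph G k v0).card
      = (sph G i v0).card * (sph G j v ∩ sph G k v0).card := by
    rw [Finset.sum_congr rfl fun x hx => hS2 j k i hj hk hi x hx v hv,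
      Finset.sum_const, smul_eq_mul]
  have h2 : ∑ y ∈ sph G k v0, (sph G j y ∩ sph G i v0).card
      = (sph G k v0).card * (sph G j z ∩ sph G i v0).card := by
    rw [Finset.sum_congr rfl fun y hy => hS2 j i k hj hi hk y hy z hz,
      Finset.sum_const, smul_eq_mul]
  rw [← h1, key, h2]

end
end

section
/- Let Γ be a finite connected self-centered simple graph with vertex set V and base point v0 ∈ V, satisfying conditions (S1) and (S2). Then p_{i,j}^k = p_{j,i}^k holds for all i, j, k ∈ I if and only if the matrix identity P_h · D = D · A_h holds for every h ∈ I. -/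
open Finset

noncomputable section

section Aux
variable {V : Type*} [Fintype V] [DecidableEq V]

omit [DecidableEq V] in
lemma mem_sph {G : SimpleGraph V} {k : ℕ} {v w : V} : w ∈ sph G k v ↔ G.dist v w = k := by
  simp [sph]

omit [DecidableEq V] in
lemma dist_le_gdiam (G : SimpleGraph V) (v w : V) : G.dist v w ≤ gdiam G :=
  le_trans (Finset.le_sup (f := fun w => G.dist v w) (Finset.mem_univ w))
    (Finset.le_sup (f := fun v => ecc G v) (Finset.mem_univ v))

omit [Fintype V] [DecidableEq V] in
lemma exists_dist_eq_of_le (G : SimpleGraph V) (hconn : G.Connected) (v0 : V) :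
    ∀ m : ℕ, ∀ u : V, G.dist v0 u = m → ∀ i ≤ m, ∃ x, G.dist v0 x = i := by
  intro m
  induction m with
  | zero =>
    intro u _ i hi
    interval_cases i
    exact ⟨v0, SimpleGraph.dist_self⟩
  | succ n ih =>
    intro u hu i hi
    rcases Nat.lt_succ_iff_lt_or_eq.mp (Nat.lt_succ_of_le hi) with h | h
    · obtain ⟨p, hp⟩ := hconn.exists_walk_length_eq_dist v0 u
      have hplen : p.reverse.length = n + 1 := by
        rw [SimpleGraph.Walk.length_reverse, hp, hu]
      cases hq : p.reverse with
      | nil => rw [hq] at hplen; simp at hplen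
      | @cons _ u' _ hadj q =>
        have hqlen : q.length = n := by
          rw [hq] at hplen; simpa using hplen
        have h1 : G.dist v0 u' ≤ n := by
          have := SimpleGraph.dist_le q.reverse
          rwa [SimpleGraph.Walk.length_reverse, hqlen] at this
        have h2 : n ≤ G.dist v0 u' := by
          have htri := hconn.dist_triangle (u := v0) (v := u') (w := u)
          have : G.dist u' u ≤ 1 :=
            le_trans (SimpleGraph.dist_le (SimpleGraph.Walk.cons hadj.symm SimpleGraph.Walk.nil)) (by simp)
          omega
        exact ih u' (le_antisymm h1 h2) i (by omega)
    · exact ⟨u, by omega⟩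

lemma pcoef_eq (G : SimpleGraph V) (v0 : V)
    (hS1 : ∀ i : ℕ, i ≤ gdiam G → ∀ v w : V, (sph G i v).card = (sph G i w).card)
    (hS2 : ∀ i j k : ℕ, i ≤ gdiam G → j ≤ gdiam G → k ≤ gdiam G →
      ∀ v ∈ sph G k v0, ∀ w ∈ sph G k v0,
        (sph G i v ∩ sph G j v0).card = (sph G i w ∩ sph G j v0).card)
    (i j k : ℕ) (hi : i ≤ gdiam G) (hj : j ≤ gdiam G) (hk : k ≤ gdiam G)
    (v : V) (hv : v ∈ sph G i v0) :
    pcoef G v0 i j k = ((sph G j v ∩ sph G k v0).card : ℝ) / ((sph G j v).card : ℝ) := by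
  have hc : ((sph G i v0).card : ℝ) ≠ 0 := by
    have : 0 < (sph G i v0).card := Finset.card_pos.mpr ⟨v, hv⟩
    exact_mod_cast this.ne'
  unfold pcoef
  rw [Finset.sum_congr rfl (fun w hw => by
    rw [hS2 j k i hj hk hi w hw v hv, hS1 j hj w v])]
  rw [Finset.sum_const, nsmul_eq_mul, one_div, ← mul_assoc, inv_mul_cancel₀ hc, one_mul]

lemma PD_entry (G : SimpleGraph V) (v0 : V) (h : ℕ) (i : Fin (gdiam G + 1)) (v : V) :
    (Pmat G v0 h * Dmat G v0) i v = pcoef G v0 h (G.dist v0 v) (i : ℕ) := by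
  have hd : G.dist v0 v ≤ gdiam G := dist_le_gdiam G v0 v
  rw [Matrix.mul_apply]
  rw [Finset.sum_eq_single (⟨G.dist v0 v, Nat.lt_succ_of_le hd⟩ : Fin (gdiam G + 1))]
  · simp [Pmat, Dmat]
  · intro b _ hb
    have : G.dist v0 v ≠ (b : ℕ) := fun he => hb (Fin.ext (by simp [← he]))
    simp [Dmat, this]
  · simp

lemma DA_entry (G : SimpleGraph V) (v0 : V) (h : ℕ) (i : Fin (gdiam G + 1)) (v : V) :
    (Dmat G v0 * Anorm G v0 h) i v
      = ((sph G h v ∩ sph G (i : ℕ) v0).card : ℝ) / ((sph G h v0).card : ℝ) := by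
  rw [Matrix.mul_apply]
  have key : ∀ w : V, Dmat G v0 i w * Anorm G v0 h w v
      = if w ∈ sph G h v ∩ sph G (i : ℕ) v0 then ((sph G h v0).card : ℝ)⁻¹ else 0 := by
    intro w
    simp only [Dmat, Anorm, Adjk, Matrix.smul_apply, Matrix.of_apply, smul_eq_mul,
      Finset.mem_inter, mem_sph]
    by_cases h1 : G.dist v0 w = (i : ℕ) <;> by_cases h2 : G.dist v w = h <;>
      simp [h1, h2, SimpleGraph.dist_comm (u := w) (v := v)]
  simp_rw [key]
  rw [Finset.sum_ite_mem, Finset.univ_inter, Finset.sum_const, nsmul_eq_mul, div_eq_mul_inv]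

end Aux

theorem stmt6 {V : Type*} [Fintype V] [DecidableEq V] (G : SimpleGraph V)
    (hconn : G.Connected) (v0 : V)
    (hsc : ∀ v : V, ecc G v = gdiam G)
    (hS1 : ∀ i : ℕ, i ≤ gdiam G → ∀ v w : V, (sph G i v).card = (sph G i w).card)
    (hS2 : ∀ i j k : ℕ, i ≤ gdiam G → j ≤ gdiam G → k ≤ gdiam G →
      ∀ v ∈ sph G k v0, ∀ w ∈ sph G k v0,
        (sph G i v ∩ sph G j v0).card = (sph G i w ∩ sph G j v0).card) :
    (∀ i j k : ℕ, i ≤ gdiam G → j ≤ gdiam G → k ≤ gdiam G →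
        pcoef G v0 i j k = pcoef G v0 j i k) ↔
      (∀ h : ℕ, h ≤ gdiam G →
        Pmat G v0 h * Dmat G v0 = Dmat G v0 * Anorm G v0 h) := by

  have hex : ∀ i : ℕ, i ≤ gdiam G → ∃ v, v ∈ sph G i v0 := by
    intro i hi
    have : Nonempty V := hconn.nonempty
    have hne : (Finset.univ : Finset V).Nonempty := Finset.univ_nonempty (α := V)
    obtain ⟨u, -, hu⟩ := Finset.exists_mem_eq_sup Finset.univ hne (fun w => G.dist v0 w)
    have hu' : G.dist v0 u = gdiam G := by rw [← hsc v0]; exact hu.symm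
    obtain ⟨x, hx⟩ := exists_dist_eq_of_le G hconn v0 (gdiam G) u hu' i hi
    exact ⟨x, mem_sph.mpr hx⟩
  constructor
  · intro hsym h hh
    ext i v
    rw [PD_entry, DA_entry]
    have hk : G.dist v0 v ≤ gdiam G := dist_le_gdiam G v0 v
    have hi : (i : ℕ) ≤ gdiam G := Nat.lt_succ_iff.mp i.isLt
    have hv : v ∈ sph G (G.dist v0 v) v0 := mem_sph.mpr rfl
    rw [hsym h (G.dist v0 v) (i : ℕ) hh hk hi,
      pcoef_eq G v0 hS1 hS2 _ _ _ hk hh hi v hv, hS1 h hh v v0]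
  · intro hmat i j k hi hj hk
    obtain ⟨v, hv⟩ := hex i hi
    have h2 := congrFun (congrFun (hmat j hj) ⟨k, Nat.lt_succ_of_le hk⟩) v
    rw [show ((Pmat G v0 j * Dmat G v0) ⟨k, Nat.lt_succ_of_le hk⟩ v) =
        pcoef G v0 j (G.dist v0 v) k from PD_entry G v0 j ⟨k, Nat.lt_succ_of_le hk⟩ v,
      show ((Dmat G v0 * Anorm G v0 j) ⟨k, Nat.lt_succ_of_le hk⟩ v) =
        ((sph G j v ∩ sph G k v0).card : ℝ) / ((sph G j v0).card : ℝ) from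
          DA_entry G v0 j ⟨k, Nat.lt_succ_of_le hk⟩ v,
      mem_sph.mp hv] at h2
    rw [pcoef_eq G v0 hS1 hS2 i j k hi hj hk v hv, h2, hS1 j hj v0 v]


end
end

section
/- Let I be a finite index set containing a distinguished element 0 and let q_{i,j}^k be real numbers indexed by i, j, k ∈ I satisfying: q_{i,j}^k ≥ 0 for all i,j,k; Σ_{k∈I} q_{i,j}^k = 1 for all i,j; q_{0,j}^k = δ_{j,k} and q_{j,0}^k = δ_{j,k} for all j,k; q_{i,j}^0 ≠ 0 if and only if i = j; and q_{i,j}^k = q_{j,i}^k for all i,j,k (commutativity). For k ∈ I, let Q_k be the I×I real matrix with (i,j)-entry q_{k,j}^i. Then Q_i · Q_j = Q_j · Q_i holds for all i, j ∈ I if and only if Σ_{h∈I} q_{l,j}^h · q_{i,h}^m = Σ_{h∈I} q_{i,l}^h · q_{h,j}^m holds for all i, j, l, m ∈ I (associativity). -/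
open Finset

theorem stmt8 {I : Type*} [Fintype I] [DecidableEq I] (e : I) (q : I → I → I → ℝ)
    (hnonneg : ∀ i j k : I, 0 ≤ q i j k)
    (hsum : ∀ i j : I, ∑ k : I, q i j k = 1)
    (hunitl : ∀ j k : I, q e j k = if j = k then 1 else 0)
    (hunitr : ∀ j k : I, q j e k = if j = k then 1 else 0)
    (hzero : ∀ i j : I, q i j e ≠ 0 ↔ i = j)
    (hcomm : ∀ i j k : I, q i j k = q j i k) :
    (∀ i j : I,
        (Matrix.of fun a b => q i b a) * (Matrix.of fun a b => q j b a) =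
          (Matrix.of fun a b => q j b a) * (Matrix.of fun a b => q i b a)) ↔
      (∀ i j l m : I, ∑ h : I, q l j h * q i h m = ∑ h : I, q i l h * q h j m) := by
  constructor
  · intro H i j l m
    have h1 := congrFun (congrFun (H i j) m) l
    simp only [Matrix.mul_apply, Matrix.of_apply] at h1
    calc ∑ h : I, q l j h * q i h m
        = ∑ h : I, q i h m * q j l h := by
          refine Finset.sum_congr rfl fun h _ => ?_
          rw [hcomm l j, mul_comm]
      _ = ∑ h : I, q j h m * q i l h := h1
      _ = ∑ h : I, q i l h * q h j m := by
          refine Finset.sum_congr rfl fun h _ => ?_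
          rw [hcomm h j, mul_comm]
  · intro H i j
    ext a b
    simp only [Matrix.mul_apply, Matrix.of_apply]
    have h1 := H i j b a
    calc ∑ h : I, q i h a * q j b h
        = ∑ h : I, q b j h * q i h a := by
          refine Finset.sum_congr rfl fun h _ => ?_
          rw [hcomm b j, mul_comm]
      _ = ∑ h : I, q i b h * q h j a := h1
      _ = ∑ h : I, q j h a * q i b h := by
          refine Finset.sum_congr rfl fun h _ => ?_
          rw [hcomm h j, mul_comm]
end

section
/- Let Γ be a finite connected simple graph of diameter 2 with vertex set V and base point v0 ∈ V, satisfying conditions (S1) and (S2). Then (Γ, v0) is hypergroup productive: p_{i,j}^k = p_{j,i}^k for all i,j,k ∈ {0,1,2} and Σ_{h∈{0,1,2}} p_{l,j}^h p_{i,h}^m = Σ_{h∈{0,1,2}} p_{i,l}^h p_{h,j}^m for all i,j,l,m ∈ {0,1,2}. -/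
set_option linter.unusedSectionVars false
set_option linter.unusedVariables false
set_option maxHeartbeats 1000000


open Finset

noncomputable section

namespace MyAux

variable {V : Type*} [Fintype V] [DecidableEq V] (G : SimpleGraph V) (v0 : V)

lemma mem_sph {k : ℕ} {v w : V} : w ∈ sph G k v ↔ G.dist v w = k := by
  simp [sph]

lemma ite_mul_ite (p q : Prop) [Decidable p] [Decidable q] :
    (if p then (1:ℕ) else 0) * (if q then 1 else 0) = if p ∧ q then 1 else 0 := by
  by_cases hp : p <;> by_cases hq : q <;> simp [hp, hq]

lemma card_sph_inter (a : ℕ) (v : V) (X : Finset V) :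
    (sph G a v ∩ X).card = ∑ x ∈ X, if G.dist v x = a then 1 else 0 := by
  have h : sph G a v ∩ X = X.filter (fun x => G.dist v x = a) := by
    ext x; simp [sph, Finset.mem_filter, and_comm]
  rw [h, Finset.card_filter]

lemma sum3_card_inter (hd : ∀ x y : V, G.dist x y ≤ 2) (v : V) (X : Finset V) :
    ∑ j ∈ Finset.range 3, (sph G j v ∩ X).card = X.card := by
  simp only [card_sph_inter]
  rw [Finset.sum_comm, Finset.card_eq_sum_ones]
  refine Finset.sum_congr rfl fun x hx => ?_
  rw [Finset.sum_ite_eq (Finset.range 3) (G.dist v x) (fun _ => 1),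
    if_pos (Finset.mem_range.mpr (by have := hd v x; omega))]

lemma sph_zero (hconn : G.Connected) (w : V) : sph G 0 w = {w} := by
  ext x
  simp [sph, hconn.dist_eq_zero_iff, eq_comm]

lemma zero_case (hconn : G.Connected) (c : ℕ) (w u : V) :
    (sph G 0 w ∩ sph G c u).card = (sph G c w ∩ sph G 0 u).card := by
  rw [sph_zero G hconn, sph_zero G hconn, Finset.inter_comm (sph G c w)]
  by_cases h : G.dist u w = c
  · rw [Finset.singleton_inter_of_mem (mem_sph G |>.mpr h),
      Finset.singleton_inter_of_mem (mem_sph G |>.mpr (by rwa [SimpleGraph.dist_comm]))]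
    simp
  · rw [Finset.singleton_inter_of_notMem (fun hm => h ((mem_sph G).mp hm)),
      Finset.singleton_inter_of_notMem
        (fun hm => h (by rw [SimpleGraph.dist_comm]; exact (mem_sph G).mp hm))]

lemma swap_card (hconn : G.Connected) (hd : ∀ x y : V, G.dist x y ≤ 2)
    (hS1 : ∀ i : ℕ, i ≤ 2 → ∀ v w : V, (sph G i v).card = (sph G i w).card)
    (a c : ℕ) (ha : a ≤ 2) (hc : c ≤ 2) (w u : V) :
    (sph G a w ∩ sph G c u).card = (sph G c w ∩ sph G a u).card := by
  have key : ∀ w u : V, (sph G 1 w ∩ sph G 2 u).card = (sph G 2 w ∩ sph G 1 u).card := by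
    intro w u
    have h1 := sum3_card_inter G hd w (sph G 1 u)
    have h2 := sum3_card_inter G hd u (sph G 1 w)
    rw [show (3:ℕ) = 2+1 from rfl, Finset.sum_range_succ, Finset.sum_range_succ,
      Finset.sum_range_one] at h1 h2
    have hr := hS1 1 (by norm_num) u w
    have h0 : (sph G 0 w ∩ sph G 1 u).card = (sph G 0 u ∩ sph G 1 w).card := by
      rw [zero_case G hconn, Finset.inter_comm]
    have hmid : (sph G 1 w ∩ sph G 1 u).card = (sph G 1 u ∩ sph G 1 w).card := by
      rw [Finset.inter_comm]
    have hgoal : (sph G 1 w ∩ sph G 2 u).card = (sph G 2 u ∩ sph G 1 w).card := by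
      rw [Finset.inter_comm]
    omega
  interval_cases a <;> interval_cases c
  · rfl
  · exact zero_case G hconn 1 w u
  · exact zero_case G hconn 2 w u
  · exact (zero_case G hconn 1 w u).symm
  · rfl
  · exact key w u
  · exact (zero_case G hconn 2 w u).symm
  · exact (key w u).symm
  · rfl


/-- `N i j k = Σ_{v ∈ S_k(v0)} |S_i(v) ∩ S_j(v0)|`. -/
def Nfun {V : Type*} [Fintype V] [DecidableEq V] (G : SimpleGraph V) (v0 : V)
    (i j k : ℕ) : ℕ :=
  ∑ v ∈ sph G k v0, (sph G i v ∩ sph G j v0).card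

/-- `T a b c d = Σ_v |S_a(v) ∩ S_b(v0)|·|S_c(v) ∩ S_d(v0)|`. -/
def Tfun {V : Type*} [Fintype V] [DecidableEq V] (G : SimpleGraph V) (v0 : V)
    (a b c d : ℕ) : ℕ :=
  ∑ v : V, (sph G a v ∩ sph G b v0).card * (sph G c v ∩ sph G d v0).card


lemma Nswap23 (i j k : ℕ) : Nfun G v0 i j k = Nfun G v0 i k j := by
  unfold Nfun
  simp only [card_sph_inter]
  rw [Finset.sum_comm]
  exact Finset.sum_congr rfl fun w _ => Finset.sum_congr rfl fun v _ => by
    rw [SimpleGraph.dist_comm]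

lemma Nswap12 (hconn : G.Connected) (hd : ∀ x y : V, G.dist x y ≤ 2)
    (hS1 : ∀ i : ℕ, i ≤ 2 → ∀ v w : V, (sph G i v).card = (sph G i w).card)
    (i j : ℕ) (hi : i ≤ 2) (hj : j ≤ 2) (k : ℕ) :
    Nfun G v0 i j k = Nfun G v0 j i k :=
  Finset.sum_congr rfl fun v _ => swap_card G hconn hd hS1 i j hi hj v v0

lemma Tswap12 (hconn : G.Connected) (hd : ∀ x y : V, G.dist x y ≤ 2)
    (hS1 : ∀ i : ℕ, i ≤ 2 → ∀ v w : V, (sph G i v).card = (sph G i w).card)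
    (a b : ℕ) (ha : a ≤ 2) (hb : b ≤ 2) (c d : ℕ) :
    Tfun G v0 a b c d = Tfun G v0 b a c d :=
  Finset.sum_congr rfl fun v _ => by
    rw [swap_card G hconn hd hS1 a b ha hb v v0]

lemma card_inter_two (a c : ℕ) (w u : V) :
    (sph G a w ∩ sph G c u).card =
      ∑ v : V, (if G.dist v w = a then 1 else 0) * (if G.dist v u = c then 1 else 0) := by
  have h : sph G a w ∩ sph G c u =
      Finset.univ.filter (fun v => G.dist v w = a ∧ G.dist v u = c) := by
    ext v
    simp [sph, Finset.mem_filter, SimpleGraph.dist_comm]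
  rw [h, Finset.card_filter]
  exact Finset.sum_congr rfl fun v _ => (ite_mul_ite _ _).symm

lemma Tformula (a b c d : ℕ) :
    Tfun G v0 a b c d =
      ∑ w ∈ sph G b v0, ∑ u ∈ sph G d v0, (sph G a w ∩ sph G c u).card := by
  calc Tfun G v0 a b c d
      = ∑ v : V, ∑ w ∈ sph G b v0, ∑ u ∈ sph G d v0,
          ((if G.dist v w = a then 1 else 0) * if G.dist v u = c then 1 else 0) := by
        refine Finset.sum_congr rfl fun v _ => ?_
        rw [card_sph_inter, card_sph_inter, Finset.sum_mul_sum]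
    _ = ∑ w ∈ sph G b v0, ∑ u ∈ sph G d v0, ∑ v : V,
          ((if G.dist v w = a then 1 else 0) * if G.dist v u = c then 1 else 0) := by
        rw [Finset.sum_comm]
        exact Finset.sum_congr rfl fun w _ => Finset.sum_comm
    _ = ∑ w ∈ sph G b v0, ∑ u ∈ sph G d v0, (sph G a w ∩ sph G c u).card :=
        Finset.sum_congr rfl fun w _ => Finset.sum_congr rfl fun u _ =>
          (card_inter_two G a c w u).symm

lemma Tswap13 (hconn : G.Connected) (hd : ∀ x y : V, G.dist x y ≤ 2)
    (hS1 : ∀ i : ℕ, i ≤ 2 → ∀ v w : V, (sph G i v).card = (sph G i w).card)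
    (a c : ℕ) (ha : a ≤ 2) (hc : c ≤ 2) (b d : ℕ) :
    Tfun G v0 a b c d = Tfun G v0 c b a d := by
  rw [Tformula, Tformula]
  exact Finset.sum_congr rfl fun w _ => Finset.sum_congr rfl fun u _ =>
    swap_card G hconn hd hS1 a c ha hc w u


lemma dist_le_two (hdiam : gdiam G = 2) (x y : V) : G.dist x y ≤ 2 := by
  have h1 : G.dist x y ≤ ecc G x := Finset.le_sup (f := fun w => G.dist x w) (Finset.mem_univ y)
  have h2 : ecc G x ≤ gdiam G := Finset.le_sup (f := fun v => ecc G v) (Finset.mem_univ x)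
  omega

lemma sph_nonempty (hconn : G.Connected) (hdiam : gdiam G = 2)
    (hS1 : ∀ i : ℕ, i ≤ 2 → ∀ v w : V, (sph G i v).card = (sph G i w).card) :
    ∀ i : ℕ, i ≤ 2 → (sph G i v0).Nonempty := by
  obtain ⟨v, -, hv⟩ := Finset.exists_mem_eq_sup (Finset.univ : Finset V)
    ⟨v0, Finset.mem_univ v0⟩ (fun v => ecc G v)
  have hv2 : ecc G v = 2 := by rw [← hdiam]; exact hv.symm
  obtain ⟨w, -, hw⟩ := Finset.exists_mem_eq_sup (Finset.univ : Finset V)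
    ⟨v0, Finset.mem_univ v0⟩ (fun w => G.dist v w)
  have hw2 : G.dist v w = 2 := by rw [← hv2]; exact hw.symm
  obtain ⟨p, -⟩ := SimpleGraph.exists_walk_of_dist_ne_zero (by omega : G.dist v w ≠ 0)
  cases p with
  | nil => rw [SimpleGraph.dist_self] at hw2; omega
  | @cons _ u _ hadj q =>
    intro i hi
    interval_cases i
    · exact ⟨v0, (mem_sph G).mpr SimpleGraph.dist_self⟩
    · have hne : (sph G 1 v).Nonempty :=
        ⟨u, (mem_sph G).mpr (SimpleGraph.dist_eq_one_iff_adj.mpr hadj)⟩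
      rw [← Finset.card_pos] at hne ⊢
      rwa [hS1 1 (by norm_num) v0 v]
    · have hne : (sph G 2 v).Nonempty := ⟨w, (mem_sph G).mpr hw2⟩
      rw [← Finset.card_pos] at hne ⊢
      rwa [hS1 2 (by norm_num) v0 v]


lemma sumNN_eq_T (hconn : G.Connected) (hdiam : gdiam G = 2)
    (hS1 : ∀ i : ℕ, i ≤ 2 → ∀ v w : V, (sph G i v).card = (sph G i w).card)
    (hS2 : ∀ i j k : ℕ, i ≤ 2 → j ≤ 2 → k ≤ 2 →
      ∀ v ∈ sph G k v0, ∀ w ∈ sph G k v0,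
        (sph G i v ∩ sph G j v0).card = (sph G i w ∩ sph G j v0).card)
    (a b c d : ℕ) (ha : a ≤ 2) (hb : b ≤ 2) (hc : c ≤ 2) (hd : d ≤ 2) :
    ∑ h ∈ Finset.range 3,
        (Nfun G v0 a b h : ℝ) * (Nfun G v0 c d h : ℝ) / ((sph G h v0).card : ℝ)
      = (Tfun G v0 a b c d : ℝ) := by
  have hdle := dist_le_two G hdiam
  have hfib : Tfun G v0 a b c d = ∑ h ∈ Finset.range 3, ∑ v ∈ sph G h v0,
      ((sph G a v ∩ sph G b v0).card * (sph G c v ∩ sph G d v0).card) :=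
    (Finset.sum_fiberwise_of_maps_to
      (fun v _ => Finset.mem_range.mpr (by have := hdle v0 v; omega)) _).symm
  rw [hfib, Nat.cast_sum]
  refine Finset.sum_congr rfl fun h hh => ?_
  have hh2 : h ≤ 2 := by have := Finset.mem_range.mp hh; omega
  obtain ⟨v1, hv1⟩ := sph_nonempty G v0 hconn hdiam hS1 h hh2
  have hab : ∀ v ∈ sph G h v0,
      (sph G a v ∩ sph G b v0).card = (sph G a v1 ∩ sph G b v0).card :=
    fun v hv => hS2 a b h ha hb hh2 v hv v1 hv1
  have hcd : ∀ v ∈ sph G h v0,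
      (sph G c v ∩ sph G d v0).card = (sph G c v1 ∩ sph G d v0).card :=
    fun v hv => hS2 c d h hc hd hh2 v hv v1 hv1
  have hNab : Nfun G v0 a b h = (sph G h v0).card * (sph G a v1 ∩ sph G b v0).card := by
    unfold Nfun; rw [Finset.sum_congr rfl hab, Finset.sum_const, smul_eq_mul]
  have hNcd : Nfun G v0 c d h = (sph G h v0).card * (sph G c v1 ∩ sph G d v0).card := by
    unfold Nfun; rw [Finset.sum_congr rfl hcd, Finset.sum_const, smul_eq_mul]
  have hsum : ∑ v ∈ sph G h v0,
      ((sph G a v ∩ sph G b v0).card * (sph G c v ∩ sph G d v0).card)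
      = (sph G h v0).card *
        ((sph G a v1 ∩ sph G b v0).card * (sph G c v1 ∩ sph G d v0).card) := by
    rw [Finset.sum_congr rfl (fun v hv => by rw [hab v hv, hcd v hv]),
      Finset.sum_const, smul_eq_mul]
  have hμ : ((sph G h v0).card : ℝ) ≠ 0 :=
    Nat.cast_ne_zero.mpr (Finset.card_ne_zero_of_mem hv1)
  rw [hsum, hNab, hNcd]
  push_cast
  field_simp

lemma pcoef_eq
    (hS1 : ∀ i : ℕ, i ≤ 2 → ∀ v w : V, (sph G i v).card = (sph G i w).card)
    (i j k : ℕ) (hj : j ≤ 2) :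
    pcoef G v0 i j k =
      (Nfun G v0 j k i : ℝ) / (((sph G i v0).card : ℝ) * ((sph G j v0).card : ℝ)) := by
  unfold pcoef Nfun
  have hstep : ∀ v ∈ sph G i v0,
      ((sph G j v ∩ sph G k v0).card : ℝ) / ((sph G j v).card : ℝ)
      = ((sph G j v ∩ sph G k v0).card : ℝ) / ((sph G j v0).card : ℝ) := fun v hv => by
    rw [hS1 j hj v v0]
  rw [Finset.sum_congr rfl hstep, ← Finset.sum_div, Nat.cast_sum,
    div_mul_div_comm, one_mul]


end MyAux

open MyAux in
theorem stmt13 {V : Type*} [Fintype V] [DecidableEq V] (G : SimpleGraph V)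
    (hconn : G.Connected) (v0 : V) (hdiam : gdiam G = 2)
    (hS1 : ∀ i : ℕ, i ≤ 2 → ∀ v w : V, (sph G i v).card = (sph G i w).card)
    (hS2 : ∀ i j k : ℕ, i ≤ 2 → j ≤ 2 → k ≤ 2 →
      ∀ v ∈ sph G k v0, ∀ w ∈ sph G k v0,
        (sph G i v ∩ sph G j v0).card = (sph G i w ∩ sph G j v0).card) :
    (∀ i j k : ℕ, i ≤ 2 → j ≤ 2 → k ≤ 2 →
        pcoef G v0 i j k = pcoef G v0 j i k) ∧
      (∀ i j l m : ℕ, i ≤ 2 → j ≤ 2 → l ≤ 2 → m ≤ 2 →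
        ∑ h ∈ Finset.range 3, pcoef G v0 l j h * pcoef G v0 i h m =
          ∑ h ∈ Finset.range 3, pcoef G v0 i l h * pcoef G v0 h j m) := by
  have hd := MyAux.dist_le_two G hdiam
  have hne := MyAux.sph_nonempty G v0 hconn hdiam hS1
  constructor
  · intro i j k hi hj hk
    rw [MyAux.pcoef_eq G v0 hS1 i j k hj, MyAux.pcoef_eq G v0 hS1 j i k hi]
    have hN : Nfun G v0 j k i = Nfun G v0 i k j := by
      rw [MyAux.Nswap23, MyAux.Nswap12 G v0 hconn hd hS1 j i hj hi, MyAux.Nswap23]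
    rw [hN, mul_comm (((sph G i v0).card : ℝ)) (((sph G j v0).card : ℝ))]
  · intro i j l m hi hj hl hm
    have e1 : ∀ h ∈ Finset.range 3,
        pcoef G v0 l j h * pcoef G v0 i h m
          = (Nfun G v0 l j h : ℝ) * (Nfun G v0 i m h) / ((sph G h v0).card : ℝ)
            * (1 / (((sph G i v0).card : ℝ) * ((sph G j v0).card : ℝ)
                * ((sph G l v0).card : ℝ))) := by
      intro h hh
      have hh2 : h ≤ 2 := by have := Finset.mem_range.mp hh; omega
      rw [MyAux.pcoef_eq G v0 hS1 l j h hj, MyAux.pcoef_eq G v0 hS1 i h m hh2]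
      rw [show Nfun G v0 j h l = Nfun G v0 l j h from by
        rw [MyAux.Nswap23, MyAux.Nswap12 G v0 hconn hd hS1 j l hj hl]]
      rw [show Nfun G v0 h m i = Nfun G v0 i m h from by
        rw [MyAux.Nswap23, MyAux.Nswap12 G v0 hconn hd hS1 h i hh2 hi, MyAux.Nswap23]]
      ring
    have e2 : ∀ h ∈ Finset.range 3,
        pcoef G v0 i l h * pcoef G v0 h j m
          = (Nfun G v0 i l h : ℝ) * (Nfun G v0 j m h) / ((sph G h v0).card : ℝ)
            * (1 / (((sph G i v0).card : ℝ) * ((sph G j v0).card : ℝ)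
                * ((sph G l v0).card : ℝ))) := by
      intro h hh
      have hh2 : h ≤ 2 := by have := Finset.mem_range.mp hh; omega
      rw [MyAux.pcoef_eq G v0 hS1 i l h hl, MyAux.pcoef_eq G v0 hS1 h j m hj]
      rw [show Nfun G v0 l h i = Nfun G v0 i l h from by
        rw [MyAux.Nswap23, MyAux.Nswap12 G v0 hconn hd hS1 l i hl hi]]
      ring
    rw [Finset.sum_congr rfl e1, Finset.sum_congr rfl e2, ← Finset.sum_mul, ← Finset.sum_mul,
      MyAux.sumNN_eq_T G v0 hconn hdiam hS1 hS2 l j i m hl hj hi hm,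
      MyAux.sumNN_eq_T G v0 hconn hdiam hS1 hS2 i l j m hi hl hj hm]
    have hTeq : Tfun G v0 l j i m = Tfun G v0 i l j m := by
      rw [MyAux.Tswap12 G v0 hconn hd hS1 l j hl hj,
        MyAux.Tswap13 G v0 hconn hd hS1 j i hj hi]
    rw [hTeq]

end
end
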